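/- arXiv:2401.14973 — 4 statements merged into one kernel-verified Lean document; each statement's English description precedes it below -/
import Mathlib

section
/- Step 1b of the smoothing proof for a recurrent autoregressive hidden Markov model: for every t with 1 ≤ t ≤ T−2, every observation sequence x_{1:(t+2)}, and all states k, k' ∈ {1,…,K}, P(z_t = k | z_{t+1} = k', x_{1:(t+2)}) = P(z_t = k | z_{t+1} = k', x_{1:(t+1)}). -/
open Finset
open scoped Classical

namespace RARHMM

instance {n : ℕ} [NeZero n] : Nonempty (Fin n) :=
  ⟨⟨0, Nat.pos_of_ne_zero (NeZero.ne n)⟩⟩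

/-- Extend a sequence indexed by `Fin T` to all of `ℕ`, using an arbitrary
value beyond `T`. -/
noncomputable def extSeq {α : Type*} [Nonempty α] {T : ℕ} (f : Fin T → α) (i : ℕ) : α :=
  if h : i < T then f ⟨i, h⟩ else Classical.arbitrary α

variable {𝒳 : Type*}

/-- Joint pmf of a recurrent autoregressive HMM on internal times `0, …, T-1`
(representing the paper's times `1, …, T`).  The transition kernel `A t` and
the emission kernel `η t` may read the observation sequence only at indices
`< t` (this is enforced by `IsRARHMM.A_dep` and `IsRARHMM.eta_dep` below). -/
noncomputable def joint {K : ℕ} (T : ℕ) (π : Fin K → ℝ)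
    (A : ℕ → Fin K → (ℕ → 𝒳) → Fin K → ℝ)
    (η : ℕ → Fin K → (ℕ → 𝒳) → 𝒳 → ℝ)
    (z : ℕ → Fin K) (x : ℕ → 𝒳) : ℝ :=
  π (z 0) * η 0 (z 0) x (x 0) *
    ∏ t ∈ Finset.Ico 1 T, (A t (z (t - 1)) x (z t) * η t (z t) x (x t))

/-- Probability of an event `E` (a predicate of the full state sequence and the
full observation sequence) under the rARHMM. -/
noncomputable def prob {K : ℕ} [NeZero K] [Fintype 𝒳] [Nonempty 𝒳] (T : ℕ)
    (π : Fin K → ℝ)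
    (A : ℕ → Fin K → (ℕ → 𝒳) → Fin K → ℝ)
    (η : ℕ → Fin K → (ℕ → 𝒳) → 𝒳 → ℝ)
    (E : (ℕ → Fin K) → (ℕ → 𝒳) → Prop) : ℝ :=
  ∑ z : Fin T → Fin K, ∑ xs : Fin T → 𝒳,
    if E (extSeq z) (extSeq xs) then joint T π A η (extSeq z) (extSeq xs) else 0

/-- Conditional probability `P(E | F)` under the rARHMM, defined as a ratio of
(marginal) probabilities. -/
noncomputable def condProb {K : ℕ} [NeZero K] [Fintype 𝒳] [Nonempty 𝒳] (T : ℕ)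
    (π : Fin K → ℝ)
    (A : ℕ → Fin K → (ℕ → 𝒳) → Fin K → ℝ)
    (η : ℕ → Fin K → (ℕ → 𝒳) → 𝒳 → ℝ)
    (E F : (ℕ → Fin K) → (ℕ → 𝒳) → Prop) : ℝ :=
  prob T π A η (fun z x => E z x ∧ F z x) / prob T π A η F

/-- The event that the observation sequence agrees with `x` at all indices `< t`
(the paper's conditioning event `x_{1:t}`). -/
def obsAgree {K : ℕ} (x : ℕ → 𝒳) (t : ℕ) : (ℕ → Fin K) → (ℕ → 𝒳) → Prop :=
  fun _ xs => ∀ i, i < t → xs i = x i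

/-- `(π, A, η)` is a recurrent autoregressive hidden Markov model on internal
times `0, …, T-1`: the initial distribution `π`, the transition kernels `A t`
(for `1 ≤ t ≤ T-1`) and the emission kernels `η t` (for `0 ≤ t ≤ T-1`) are
probability distributions, and the kernels at time `t` depend on the
observation sequence only through the indices `< t` (i.e. on `x_{1:(t-1)}`
in the paper's 1-indexed notation). -/
structure IsRARHMM {K : ℕ} [Fintype 𝒳] (T : ℕ) (π : Fin K → ℝ)
    (A : ℕ → Fin K → (ℕ → 𝒳) → Fin K → ℝ)
    (η : ℕ → Fin K → (ℕ → 𝒳) → 𝒳 → ℝ) : Prop where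
  pi_nonneg : ∀ k, 0 ≤ π k
  pi_sum : ∑ k, π k = 1
  A_nonneg : ∀ t k x k', 0 ≤ A t k x k'
  A_sum : ∀ t, 1 ≤ t → t < T → ∀ k x, ∑ k', A t k x k' = 1
  A_dep : ∀ t k x x', (∀ i, i < t → x i = x' i) → A t k x = A t k x'
  eta_nonneg : ∀ t k x o, 0 ≤ η t k x o
  eta_sum : ∀ t, t < T → ∀ k x, ∑ o, η t k x o = 1
  eta_dep : ∀ t k x x', (∀ i, i < t → x i = x' i) → η t k x = η t k x'

/-! ### Auxiliary machinery for the tail-swap argument -/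

def combN {α : Type*} (τ : ℕ) (f g : ℕ → α) : ℕ → α := fun i => if i < τ then f i else g i

lemma combN_self {α : Type*} (τ : ℕ) (f : ℕ → α) : combN τ f f = f := by
  funext i; unfold combN; split <;> rfl

lemma combN_lt {α : Type*} {τ i : ℕ} (h : i < τ) (f g : ℕ → α) : combN τ f g i = f i :=
  if_pos h

lemma combN_ge {α : Type*} {τ i : ℕ} (h : ¬ i < τ) (f g : ℕ → α) : combN τ f g i = g i :=
  if_neg h

def combF {α : Type*} {T : ℕ} (τ : ℕ) (f g : Fin T → α) : Fin T → α :=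
  fun i => if (i : ℕ) < τ then f i else g i

lemma combF_combF {α : Type*} {T : ℕ} (τ : ℕ) (f g : Fin T → α) :
    combF τ (combF τ f g) (combF τ g f) = f := by
  funext i; unfold combF; by_cases h : (i : ℕ) < τ <;> simp [h]

lemma extSeq_combF {α : Type*} [Nonempty α] {T τ : ℕ} (hτ : τ ≤ T) (f g : Fin T → α) :
    extSeq (combF τ f g) = combN τ (extSeq f) (extSeq g) := by
  funext i
  unfold extSeq combN combF
  by_cases h1 : i < T
  · simp only [dif_pos h1]
  · have h2 : ¬ i < τ := by omega
    simp [h1, h2]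

lemma joint_comb {K : ℕ} [Fintype 𝒳] {T : ℕ} {π : Fin K → ℝ}
    {A : ℕ → Fin K → (ℕ → 𝒳) → Fin K → ℝ} {η : ℕ → Fin K → (ℕ → 𝒳) → 𝒳 → ℝ}
    (h : IsRARHMM T π A η) {τ : ℕ} (hτ1 : 1 ≤ τ) (hτT : τ ≤ T)
    (z z' : ℕ → Fin K) (x x' : ℕ → 𝒳)
    (hz : z (τ - 1) = z' (τ - 1)) (hx : ∀ i, i < τ → x i = x' i) :
    joint T π A η (combN τ z z') (combN τ x x') =
      (π (z 0) * η 0 (z 0) x (x 0) *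
        ∏ s ∈ Finset.Ico 1 τ, (A s (z (s - 1)) x (z s) * η s (z s) x (x s))) *
      ∏ s ∈ Finset.Ico τ T, (A s (z' (s - 1)) x' (z' s) * η s (z' s) x' (x' s)) := by
  unfold joint
  rw [← Finset.prod_Ico_consecutive _ hτ1 hτT]
  have hfront : ∀ s ∈ Finset.Ico 1 τ,
      A s (combN τ z z' (s - 1)) (combN τ x x') (combN τ z z' s) *
        η s (combN τ z z' s) (combN τ x x') (combN τ x x' s)
      = A s (z (s - 1)) x (z s) * η s (z s) x (x s) := by
    intro s hs
    rw [Finset.mem_Ico] at hs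
    have hxs : ∀ i, i < s → combN τ x x' i = x i := fun i hi => if_pos (by omega)
    rw [h.A_dep s _ _ x hxs, h.eta_dep s _ _ x hxs,
      combN_lt (by omega) z z', combN_lt (by omega) z z', combN_lt (by omega) x x']
  have hback : ∀ s ∈ Finset.Ico τ T,
      A s (combN τ z z' (s - 1)) (combN τ x x') (combN τ z z' s) *
        η s (combN τ z z' s) (combN τ x x') (combN τ x x' s)
      = A s (z' (s - 1)) x' (z' s) * η s (z' s) x' (x' s) := by
    intro s hs
    rw [Finset.mem_Ico] at hs
    have hxs : ∀ i, i < s → combN τ x x' i = x' i := by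
      intro i hi
      unfold combN
      split
      · exact hx i (by omega)
      · rfl
    have e1 : combN τ z z' (s - 1) = z' (s - 1) := by
      unfold combN
      split
      · next hc =>
        have he : s - 1 = τ - 1 := by omega
        rw [he, hz, ← he]
      · rfl
    rw [h.A_dep s _ _ x' hxs, h.eta_dep s _ _ x' hxs, e1,
      combN_ge (by omega) z z', combN_ge (by omega) x x']
  rw [Finset.prod_congr rfl hfront, Finset.prod_congr rfl hback,
    combN_lt (by omega) z z', combN_lt (by omega) x x',
    h.eta_dep 0 _ _ x (fun i hi => absurd hi (Nat.not_lt_zero i))]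
  ring

lemma joint_swap {K : ℕ} [Fintype 𝒳] {T : ℕ} {π : Fin K → ℝ}
    {A : ℕ → Fin K → (ℕ → 𝒳) → Fin K → ℝ} {η : ℕ → Fin K → (ℕ → 𝒳) → 𝒳 → ℝ}
    (h : IsRARHMM T π A η) {τ : ℕ} (hτ1 : 1 ≤ τ) (hτT : τ ≤ T)
    (z z' : ℕ → Fin K) (x x' : ℕ → 𝒳)
    (hz : z (τ - 1) = z' (τ - 1)) (hx : ∀ i, i < τ → x i = x' i) :
    joint T π A η z x * joint T π A η z' x' =
      joint T π A η (combN τ z z') (combN τ x x') *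
        joint T π A η (combN τ z' z) (combN τ x' x) := by
  have h1 := joint_comb h hτ1 hτT z z' x x' hz hx
  have h2 := joint_comb h hτ1 hτT z' z x' x hz.symm (fun i hi => (hx i hi).symm)
  have h3 := joint_comb h hτ1 hτT z z x x rfl (fun i _ => rfl)
  have h4 := joint_comb h hτ1 hτT z' z' x' x' rfl (fun i _ => rfl)
  rw [combN_self, combN_self] at h3
  rw [combN_self, combN_self] at h4
  rw [h1, h2, h3, h4]
  ring

lemma prob_eq_sum_pairs {K : ℕ} [NeZero K] [Fintype 𝒳] [Nonempty 𝒳] (T : ℕ)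
    (π : Fin K → ℝ)
    (A : ℕ → Fin K → (ℕ → 𝒳) → Fin K → ℝ)
    (η : ℕ → Fin K → (ℕ → 𝒳) → 𝒳 → ℝ)
    (E : (ℕ → Fin K) → (ℕ → 𝒳) → Prop) :
    prob T π A η E = ∑ p : (Fin T → Fin K) × (Fin T → 𝒳),
      if E (extSeq p.1) (extSeq p.2) then joint T π A η (extSeq p.1) (extSeq p.2) else 0 := by
  rw [prob, ← Finset.sum_product', Finset.univ_product_univ]

lemma prob_mul_prob {K : ℕ} [NeZero K] [Fintype 𝒳] [Nonempty 𝒳] (T : ℕ)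
    (π : Fin K → ℝ)
    (A : ℕ → Fin K → (ℕ → 𝒳) → Fin K → ℝ)
    (η : ℕ → Fin K → (ℕ → 𝒳) → 𝒳 → ℝ)
    (E F : (ℕ → Fin K) → (ℕ → 𝒳) → Prop) :
    prob T π A η E * prob T π A η F =
      ∑ p : ((Fin T → Fin K) × (Fin T → 𝒳)) × ((Fin T → Fin K) × (Fin T → 𝒳)),
        (if E (extSeq p.1.1) (extSeq p.1.2) then joint T π A η (extSeq p.1.1) (extSeq p.1.2) else 0) *
        (if F (extSeq p.2.1) (extSeq p.2.2) then joint T π A η (extSeq p.2.1) (extSeq p.2.2) else 0) := by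
  rw [prob_eq_sum_pairs, prob_eq_sum_pairs, Finset.sum_mul_sum,
    ← Finset.sum_product', Finset.univ_product_univ]

/-- Term-by-term identity for the tail-swap bijection. -/
lemma termwise_swap {K : ℕ} [Fintype 𝒳] {T : ℕ} {π : Fin K → ℝ}
    {A : ℕ → Fin K → (ℕ → 𝒳) → Fin K → ℝ} {η : ℕ → Fin K → (ℕ → 𝒳) → 𝒳 → ℝ}
    (h : IsRARHMM T π A η) {t : ℕ} (ht : t + 2 < T) (x : ℕ → 𝒳) (k k' : Fin K)
    (Z Z' : ℕ → Fin K) (Xs Xs' : ℕ → 𝒳) :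
    (if Z t = k ∧ (Z (t+1) = k' ∧ ∀ i, i < t+3 → Xs i = x i)
        then joint T π A η Z Xs else 0) *
    (if Z' (t+1) = k' ∧ ∀ i, i < t+2 → Xs' i = x i
        then joint T π A η Z' Xs' else 0) =
    (if combN (t+2) Z Z' t = k ∧
        (combN (t+2) Z Z' (t+1) = k' ∧ ∀ i, i < t+2 → combN (t+2) Xs Xs' i = x i)
        then joint T π A η (combN (t+2) Z Z') (combN (t+2) Xs Xs') else 0) *
    (if combN (t+2) Z' Z (t+1) = k' ∧ ∀ i, i < t+3 → combN (t+2) Xs' Xs i = x i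
        then joint T π A η (combN (t+2) Z' Z) (combN (t+2) Xs' Xs) else 0) := by
  have hτ1 : 1 ≤ t + 2 := by omega
  have hτT : t + 2 ≤ T := le_of_lt ht
  by_cases hb : (Z t = k ∧ (Z (t+1) = k' ∧ ∀ i, i < t+3 → Xs i = x i)) ∧
      (Z' (t+1) = k' ∧ ∀ i, i < t+2 → Xs' i = x i)
  · obtain ⟨⟨h1, h2, h3⟩, h4, h5⟩ := hb
    have hzz : Z (t + 2 - 1) = Z' (t + 2 - 1) := by
      show Z (t+1) = Z' (t+1)
      rw [h2, h4]
    have hxx : ∀ i, i < t + 2 → Xs i = Xs' i := fun i hi =>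
      (h3 i (by omega)).trans (h5 i hi).symm
    have c1 : combN (t+2) Z Z' t = k ∧
        (combN (t+2) Z Z' (t+1) = k' ∧ ∀ i, i < t+2 → combN (t+2) Xs Xs' i = x i) := by
      refine ⟨?_, ?_, ?_⟩
      · rw [combN_lt (by omega)]; exact h1
      · rw [combN_lt (by omega)]; exact h2
      · intro i hi; rw [combN_lt hi]; exact h3 i (by omega)
    have c2 : combN (t+2) Z' Z (t+1) = k' ∧ ∀ i, i < t+3 → combN (t+2) Xs' Xs i = x i := by
      refine ⟨?_, ?_⟩
      · rw [combN_lt (by omega)]; exact h4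
      · intro i hi
        by_cases hc : i < t + 2
        · rw [combN_lt hc]; exact h5 i hc
        · rw [combN_ge hc]
          have : i = t + 2 := by omega
          rw [this]
          exact h3 (t+2) (by omega)
    rw [if_pos ⟨h1, h2, h3⟩, if_pos ⟨h4, h5⟩, if_pos c1, if_pos c2]
    exact joint_swap h hτ1 hτT Z Z' Xs Xs' hzz hxx
  · have hb' : ¬ ((combN (t+2) Z Z' t = k ∧
        (combN (t+2) Z Z' (t+1) = k' ∧ ∀ i, i < t+2 → combN (t+2) Xs Xs' i = x i)) ∧
        (combN (t+2) Z' Z (t+1) = k' ∧ ∀ i, i < t+3 → combN (t+2) Xs' Xs i = x i)) := by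
      rintro ⟨⟨d1, d2, d3⟩, d4, d5⟩
      apply hb
      refine ⟨⟨?_, ?_, ?_⟩, ?_, ?_⟩
      · rw [combN_lt (by omega) Z Z'] at d1; exact d1
      · rw [combN_lt (by omega) Z Z'] at d2; exact d2
      · intro i hi
        by_cases hc : i < t + 2
        · have := d3 i hc; rwa [combN_lt hc] at this
        · have hi2 : i = t + 2 := by omega
          have := d5 i (by omega)
          rw [combN_ge (by omega), hi2] at this
          rw [hi2]; exact this
      · rw [combN_lt (by omega) Z' Z] at d4; exact d4
      · intro i hi
        have := d5 i (by omega)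
        rwa [combN_lt hi] at this
    rcases not_and_or.mp hb with hc | hc <;> rcases not_and_or.mp hb' with hc' | hc' <;>
      rw [if_neg hc, if_neg hc'] <;> ring

/-- **Step 1b of the smoothing proof**: the paper's
`P(z_t = k | z_{t+1} = k', x_{1:(t+2)}) = P(z_t = k | z_{t+1} = k', x_{1:(t+1)})`
for `1 ≤ t ≤ T-2`, stated with 0-based internal time `t` (`t + 2 < T`). -/
theorem smoothing_step_1b
    {𝒳 : Type*} [Fintype 𝒳] [Nonempty 𝒳] {K T : ℕ} [NeZero K] (hT : 1 ≤ T)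
    (π : Fin K → ℝ) (A : ℕ → Fin K → (ℕ → 𝒳) → Fin K → ℝ)
    (η : ℕ → Fin K → (ℕ → 𝒳) → 𝒳 → ℝ)
    (h : IsRARHMM T π A η)
    (t : ℕ) (ht : t + 2 < T) (x : ℕ → 𝒳) (k k' : Fin K)
    (hpos : 0 < prob T π A η
      (fun z xs => z (t + 1) = k' ∧ obsAgree x (t + 3) z xs))
    (hpos' : 0 < prob T π A η
      (fun z xs => z (t + 1) = k' ∧ obsAgree x (t + 2) z xs)) :
    condProb T π A η (fun z _ => z t = k)
        (fun z xs => z (t + 1) = k' ∧ obsAgree x (t + 3) z xs) =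
      condProb T π A η (fun z _ => z t = k)
        (fun z xs => z (t + 1) = k' ∧ obsAgree x (t + 2) z xs) := by
  classical
  have hτT : t + 2 ≤ T := le_of_lt ht
  unfold condProb
  rw [div_eq_div_iff (ne_of_gt hpos) (ne_of_gt hpos'), prob_mul_prob, prob_mul_prob]
  refine Fintype.sum_bijective
    (fun p : ((Fin T → Fin K) × (Fin T → 𝒳)) × ((Fin T → Fin K) × (Fin T → 𝒳)) =>
      ((combF (t+2) p.1.1 p.2.1, combF (t+2) p.1.2 p.2.2),
       (combF (t+2) p.2.1 p.1.1, combF (t+2) p.2.2 p.1.2)))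
    ?_ _ _ ?_
  · apply Function.Involutive.bijective
    intro p
    obtain ⟨⟨a, b⟩, c, d⟩ := p
    simp only
    rw [combF_combF, combF_combF, combF_combF, combF_combF]
  · intro p
    obtain ⟨⟨z, xs⟩, z', xs'⟩ := p
    simp only [obsAgree, extSeq_combF hτT]
    convert termwise_swap h ht x k k' (extSeq z) (extSeq z') (extSeq xs) (extSeq xs') <;> exact ite_congr rfl (fun _ => rfl) (fun _ => rfl)

end RARHMM
end

section
/- Step 1 of the smoothing proof for a recurrent autoregressive hidden Markov model (by induction on the horizon): for every t with 1 ≤ t ≤ T−1, every u with t ≤ u ≤ T, every observation sequence x_{1:u}, and all states k, k' ∈ {1,…,K}, P(z_t = k | z_{t+1} = k', x_{1:u}) = P(z_t = k | z_{t+1} = k', x_{1:t}); in particular, the current state depends on all future observations x_{(t+1):T} only through the next state z_{t+1}: P(z_t = k | z_{t+1} = k', x_{1:T}) = P(z_t = k | z_{t+1} = k', x_{1:t}). -/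
open Finset
open scoped Classical

namespace RARHMM

variable {𝒳 : Type*}

section SmoothingAux

variable {𝒳 : Type*}

/-- Splice two `ℕ`-indexed sequences at threshold `m` (inclusive). -/
def spl {α : Type*} (m : ℕ) (f g : ℕ → α) : ℕ → α := fun i => if i ≤ m then f i else g i

lemma spl_self {α : Type*} (m : ℕ) (f : ℕ → α) : spl m f f = f := by
  funext i; unfold spl; split <;> rfl

lemma extSeq_spl {α : Type*} [Nonempty α] {T : ℕ} (m : ℕ) (f g : Fin T → α) :
    extSeq (fun j : Fin T => if (j : ℕ) ≤ m then f j else g j) =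
      spl m (extSeq f) (extSeq g) := by
  funext i
  unfold extSeq spl
  by_cases h : i < T <;> by_cases h' : i ≤ m <;> simp [h, h']

/-- The "past" factor of the joint, cutting between times `t` and `t+1`. -/
noncomputable def headP {K : ℕ} (π : Fin K → ℝ)
    (A : ℕ → Fin K → (ℕ → 𝒳) → Fin K → ℝ)
    (η : ℕ → Fin K → (ℕ → 𝒳) → 𝒳 → ℝ) (t : ℕ)
    (z : ℕ → Fin K) (xs : ℕ → 𝒳) : ℝ :=
  π (z 0) * η 0 (z 0) xs (xs 0) *
    ((∏ s ∈ Finset.Ico 1 (t + 2), A s (z (s - 1)) xs (z s)) *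
      ∏ s ∈ Finset.Ico 1 (t + 1), η s (z s) xs (xs s))

/-- The "future" factor of the joint, cutting between times `t` and `t+1`. -/
noncomputable def tailP {K : ℕ}
    (A : ℕ → Fin K → (ℕ → 𝒳) → Fin K → ℝ)
    (η : ℕ → Fin K → (ℕ → 𝒳) → 𝒳 → ℝ) (T t : ℕ)
    (z : ℕ → Fin K) (xs : ℕ → 𝒳) : ℝ :=
  (∏ s ∈ Finset.Ico (t + 2) T, A s (z (s - 1)) xs (z s)) *
    ∏ s ∈ Finset.Ico (t + 1) T, η s (z s) xs (xs s)

lemma joint_splice {K : ℕ} [Fintype 𝒳] {T : ℕ} (π : Fin K → ℝ)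
    (A : ℕ → Fin K → (ℕ → 𝒳) → Fin K → ℝ)
    (η : ℕ → Fin K → (ℕ → 𝒳) → 𝒳 → ℝ)
    (h : IsRARHMM T π A η) {t : ℕ} (ht : t + 1 < T)
    (z z' : ℕ → Fin K) (xs xs' : ℕ → 𝒳)
    (hz : z (t + 1) = z' (t + 1)) (hx : ∀ i, i < t + 1 → xs i = xs' i) :
    joint T π A η (spl (t + 1) z z') (spl t xs xs') =
      headP π A η t z xs * tailP A η T t z' xs' := by
  have hXSz : ∀ s, s ≤ t + 1 → (∀ i, i < s → spl t xs xs' i = xs i) := by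
    intro s hs i hi; exact if_pos (by omega)
  have hXSz' : ∀ s, t + 1 ≤ s → (∀ i, i < s → spl t xs xs' i = xs' i) := by
    intro s hs i hi
    unfold spl
    by_cases hit : i ≤ t
    · rw [if_pos hit, hx i (by omega)]
    · rw [if_neg hit]
  have hZa : ∀ s, s ≤ t + 1 → spl (t + 1) z z' s = z s := fun s hs => if_pos hs
  have hZb : ∀ s, t + 1 ≤ s → spl (t + 1) z z' s = z' s := by
    intro s hs
    unfold spl
    by_cases hc : s ≤ t + 1
    · rw [if_pos hc, show s = t + 1 by omega, hz]
    · rw [if_neg hc]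
  unfold joint
  have hsplitA : ∀ f : ℕ → ℝ,
      (∏ s ∈ Finset.Ico 1 T, f s) =
        (∏ s ∈ Finset.Ico 1 (t + 2), f s) * ∏ s ∈ Finset.Ico (t + 2) T, f s :=
    fun f => (Finset.prod_Ico_consecutive f (by omega) (by omega)).symm
  have hsplitE : ∀ f : ℕ → ℝ,
      (∏ s ∈ Finset.Ico 1 T, f s) =
        (∏ s ∈ Finset.Ico 1 (t + 1), f s) * ∏ s ∈ Finset.Ico (t + 1) T, f s :=
    fun f => (Finset.prod_Ico_consecutive f (by omega) (by omega)).symm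
  rw [Finset.prod_mul_distrib, hsplitA, hsplitE]
  have e1 : (∏ s ∈ Finset.Ico 1 (t + 2),
        A s (spl (t + 1) z z' (s - 1)) (spl t xs xs') (spl (t + 1) z z' s)) =
      ∏ s ∈ Finset.Ico 1 (t + 2), A s (z (s - 1)) xs (z s) := by
    refine Finset.prod_congr rfl fun s hs => ?_
    simp only [Finset.mem_Ico] at hs
    rw [hZa (s - 1) (by omega), hZa s (by omega),
      h.A_dep s (z (s - 1)) _ xs (hXSz s (by omega))]
  have e2 : (∏ s ∈ Finset.Ico (t + 2) T,
        A s (spl (t + 1) z z' (s - 1)) (spl t xs xs') (spl (t + 1) z z' s)) =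
      ∏ s ∈ Finset.Ico (t + 2) T, A s (z' (s - 1)) xs' (z' s) := by
    refine Finset.prod_congr rfl fun s hs => ?_
    simp only [Finset.mem_Ico] at hs
    rw [hZb (s - 1) (by omega), hZb s (by omega),
      h.A_dep s (z' (s - 1)) _ xs' (hXSz' s (by omega))]
  have e3 : (∏ s ∈ Finset.Ico 1 (t + 1),
        η s (spl (t + 1) z z' s) (spl t xs xs') (spl t xs xs' s)) =
      ∏ s ∈ Finset.Ico 1 (t + 1), η s (z s) xs (xs s) := by
    refine Finset.prod_congr rfl fun s hs => ?_
    simp only [Finset.mem_Ico] at hs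
    rw [hZa s (by omega), h.eta_dep s (z s) _ xs (hXSz s (by omega)),
      show spl t xs xs' s = xs s from if_pos (by omega)]
  have e4 : (∏ s ∈ Finset.Ico (t + 1) T,
        η s (spl (t + 1) z z' s) (spl t xs xs') (spl t xs xs' s)) =
      ∏ s ∈ Finset.Ico (t + 1) T, η s (z' s) xs' (xs' s) := by
    refine Finset.prod_congr rfl fun s hs => ?_
    simp only [Finset.mem_Ico] at hs
    rw [hZb s (by omega), h.eta_dep s (z' s) _ xs' (hXSz' s (by omega)),
      hXSz' (s + 1) (by omega) s (by omega)]
  rw [e1, e2, e3, e4, hZa 0 (by omega),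
    h.eta_dep 0 (z 0) (spl t xs xs') xs (by intro i hi; omega),
    show spl t xs xs' 0 = xs 0 from if_pos (by omega)]
  unfold headP tailP
  ring

lemma joint_head_tail {K : ℕ} [Fintype 𝒳] {T : ℕ} (π : Fin K → ℝ)
    (A : ℕ → Fin K → (ℕ → 𝒳) → Fin K → ℝ)
    (η : ℕ → Fin K → (ℕ → 𝒳) → 𝒳 → ℝ)
    (h : IsRARHMM T π A η) {t : ℕ} (ht : t + 1 < T)
    (z : ℕ → Fin K) (xs : ℕ → 𝒳) :
    joint T π A η z xs = headP π A η t z xs * tailP A η T t z xs := by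
  have := joint_splice π A η h ht z z xs xs rfl (fun _ _ => rfl)
  rwa [spl_self, spl_self] at this

lemma joint_mul_swap {K : ℕ} [Fintype 𝒳] {T : ℕ} (π : Fin K → ℝ)
    (A : ℕ → Fin K → (ℕ → 𝒳) → Fin K → ℝ)
    (η : ℕ → Fin K → (ℕ → 𝒳) → 𝒳 → ℝ)
    (h : IsRARHMM T π A η) {t : ℕ} (ht : t + 1 < T)
    (z z' : ℕ → Fin K) (xs xs' : ℕ → 𝒳)
    (hz : z (t + 1) = z' (t + 1)) (hx : ∀ i, i < t + 1 → xs i = xs' i) :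
    joint T π A η (spl (t + 1) z z') (spl t xs xs') *
      joint T π A η (spl (t + 1) z' z) (spl t xs' xs) =
    joint T π A η z xs * joint T π A η z' xs' := by
  rw [joint_splice π A η h ht z z' xs xs' hz hx,
    joint_splice π A η h ht z' z xs' xs hz.symm (fun i hi => (hx i hi).symm),
    joint_head_tail π A η h ht z xs, joint_head_tail π A η h ht z' xs']
  ring

/-- The future-swapping involution on pairs of trajectories. -/
def swp {K T : ℕ} (t : ℕ)
    (w : ((Fin T → Fin K) × (Fin T → 𝒳)) × ((Fin T → Fin K) × (Fin T → 𝒳))) :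
    ((Fin T → Fin K) × (Fin T → 𝒳)) × ((Fin T → Fin K) × (Fin T → 𝒳)) :=
  ((fun j => if (j : ℕ) ≤ t + 1 then w.1.1 j else w.2.1 j,
    fun j => if (j : ℕ) ≤ t then w.1.2 j else w.2.2 j),
   (fun j => if (j : ℕ) ≤ t + 1 then w.2.1 j else w.1.1 j,
    fun j => if (j : ℕ) ≤ t then w.2.2 j else w.1.2 j))

lemma swp_invol {K T : ℕ} (t : ℕ) :
    Function.Involutive (swp (K := K) (T := T) (𝒳 := 𝒳) t) := by
  intro w
  obtain ⟨⟨z, xs⟩, z', xs'⟩ := w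
  unfold swp
  refine Prod.ext (Prod.ext ?_ ?_) (Prod.ext ?_ ?_) <;> funext j <;>
    simp only [] <;> split_ifs <;> rfl

lemma sum4_perm {α β : Type*} [Fintype α] [Fintype β] (F G : α → β → α → β → ℝ)
    (e : (α × β) × (α × β) → (α × β) × (α × β))
    (he : Function.Involutive e)
    (hFG : ∀ z xs z' xs', F z xs z' xs' =
      G (e ((z, xs), (z', xs'))).1.1 (e ((z, xs), (z', xs'))).1.2
        (e ((z, xs), (z', xs'))).2.1 (e ((z, xs), (z', xs'))).2.2) :
    (∑ z, ∑ xs, ∑ z', ∑ xs', F z xs z' xs') =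
      ∑ z, ∑ xs, ∑ z', ∑ xs', G z xs z' xs' := by
  have h1 : (∑ w : (α × β) × α × β, F w.1.1 w.1.2 w.2.1 w.2.2) =
      ∑ w : (α × β) × α × β, G w.1.1 w.1.2 w.2.1 w.2.2 :=
    Fintype.sum_bijective e he.bijective _ _ (fun w => hFG w.1.1 w.1.2 w.2.1 w.2.2)
  simpa [Fintype.sum_prod_type] using h1

lemma term_swap {K : ℕ} [Fintype 𝒳] {T : ℕ} (π : Fin K → ℝ)
    (A : ℕ → Fin K → (ℕ → 𝒳) → Fin K → ℝ)
    (η : ℕ → Fin K → (ℕ → 𝒳) → 𝒳 → ℝ)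
    (h : IsRARHMM T π A η) {t : ℕ} (ht : t + 1 < T)
    (x : ℕ → 𝒳) (k' : Fin K) (p q : Fin K → Prop) {u v : ℕ}
    (hu : t + 1 ≤ u) (hv : t + 1 ≤ v)
    (a a' : ℕ → Fin K) (b b' : ℕ → 𝒳) :
    (if p (a t) ∧ a (t + 1) = k' ∧ (∀ i, i < u → b i = x i)
      then joint T π A η a b else 0) *
    (if q (a' t) ∧ a' (t + 1) = k' ∧ (∀ i, i < v → b' i = x i)
      then joint T π A η a' b' else 0) =
    (if p (spl (t + 1) a a' t) ∧ spl (t + 1) a a' (t + 1) = k' ∧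
        (∀ i, i < v → spl t b b' i = x i)
      then joint T π A η (spl (t + 1) a a') (spl t b b') else 0) *
    (if q (spl (t + 1) a' a t) ∧ spl (t + 1) a' a (t + 1) = k' ∧
        (∀ i, i < u → spl t b' b i = x i)
      then joint T π A η (spl (t + 1) a' a) (spl t b' b) else 0) := by
  rw [show spl (t + 1) a a' t = a t from if_pos (by omega),
    show spl (t + 1) a a' (t + 1) = a (t + 1) from if_pos le_rfl,
    show spl (t + 1) a' a t = a' t from if_pos (by omega),
    show spl (t + 1) a' a (t + 1) = a' (t + 1) from if_pos le_rfl]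
  by_cases hC : (p (a t) ∧ a (t + 1) = k' ∧ (∀ i, i < u → b i = x i)) ∧
      (q (a' t) ∧ a' (t + 1) = k' ∧ (∀ i, i < v → b' i = x i))
  · obtain ⟨⟨hp, hk, hbu⟩, hq, hk', hbv⟩ := hC
    have hbb' : ∀ i, i < t + 1 → b i = b' i := by
      intro i hi
      rw [hbu i (by omega), hbv i (by omega)]
    have hD1 : ∀ i, i < v → spl t b b' i = x i := by
      intro i hi
      unfold spl
      by_cases hit : i ≤ t
      · rw [if_pos hit]; exact hbu i (by omega)
      · rw [if_neg hit]; exact hbv i hi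
    have hD2 : ∀ i, i < u → spl t b' b i = x i := by
      intro i hi
      unfold spl
      by_cases hit : i ≤ t
      · rw [if_pos hit]; exact hbv i (by omega)
      · rw [if_neg hit]; exact hbu i hi
    rw [if_pos ⟨hp, hk, hbu⟩, if_pos ⟨hq, hk', hbv⟩, if_pos ⟨hp, hk, hD1⟩,
      if_pos ⟨hq, hk', hD2⟩]
    exact (joint_mul_swap π A η h ht a a' b b' (hk.trans hk'.symm) hbb').symm
  · have key : ¬((p (a t) ∧ a (t + 1) = k' ∧ (∀ i, i < v → spl t b b' i = x i)) ∧
        (q (a' t) ∧ a' (t + 1) = k' ∧ (∀ i, i < u → spl t b' b i = x i))) := by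
      rintro ⟨⟨hp, hk, hD1⟩, hq, hk', hD2⟩
      refine hC ⟨⟨hp, hk, fun i hi => ?_⟩, hq, hk', fun i hi => ?_⟩
      · by_cases hit : i ≤ t
        · have := hD1 i (by omega)
          rwa [show spl t b b' i = b i from if_pos hit] at this
        · have := hD2 i hi
          rwa [show spl t b' b i = b i from if_neg hit] at this
      · by_cases hit : i ≤ t
        · have := hD2 i (by omega)
          rwa [show spl t b' b i = b' i from if_pos hit] at this
        · have := hD1 i hi
          rwa [show spl t b b' i = b' i from if_neg hit] at this
    have hL : (if p (a t) ∧ a (t + 1) = k' ∧ (∀ i, i < u → b i = x i)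
        then joint T π A η a b else 0) *
        (if q (a' t) ∧ a' (t + 1) = k' ∧ (∀ i, i < v → b' i = x i)
        then joint T π A η a' b' else 0) = 0 := by
      rcases not_and_or.mp hC with h1 | h1
      · rw [if_neg h1, zero_mul]
      · rw [if_neg h1, mul_zero]
    have hR : (if p (a t) ∧ a (t + 1) = k' ∧ (∀ i, i < v → spl t b b' i = x i)
        then joint T π A η (spl (t + 1) a a') (spl t b b') else 0) *
        (if q (a' t) ∧ a' (t + 1) = k' ∧ (∀ i, i < u → spl t b' b i = x i)
        then joint T π A η (spl (t + 1) a' a) (spl t b' b) else 0) = 0 := by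
      rcases not_and_or.mp key with h1 | h1
      · rw [if_neg h1, zero_mul]
      · rw [if_neg h1, mul_zero]
    rw [hL, hR]

lemma prob_congr {K : ℕ} [NeZero K] [Fintype 𝒳] [Nonempty 𝒳] (T : ℕ)
    (π : Fin K → ℝ) (A : ℕ → Fin K → (ℕ → 𝒳) → Fin K → ℝ)
    (η : ℕ → Fin K → (ℕ → 𝒳) → 𝒳 → ℝ)
    {E F : (ℕ → Fin K) → (ℕ → 𝒳) → Prop}
    (hEF : ∀ z xs, E z xs ↔ F z xs) :
    prob T π A η E = prob T π A η F := by
  unfold prob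
  exact Finset.sum_congr rfl fun z _ => Finset.sum_congr rfl fun xs _ =>
    if_congr (hEF _ _) rfl rfl

lemma prob_cross {K : ℕ} [NeZero K] [Fintype 𝒳] [Nonempty 𝒳] {T : ℕ}
    (π : Fin K → ℝ) (A : ℕ → Fin K → (ℕ → 𝒳) → Fin K → ℝ)
    (η : ℕ → Fin K → (ℕ → 𝒳) → 𝒳 → ℝ)
    (h : IsRARHMM T π A η) {t : ℕ} (ht : t + 1 < T)
    (x : ℕ → 𝒳) (k' : Fin K) (p q : Fin K → Prop) {u v : ℕ}
    (hu : t + 1 ≤ u) (hv : t + 1 ≤ v) :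
    prob T π A η (fun z xs => p (z t) ∧ z (t + 1) = k' ∧ obsAgree x u z xs) *
      prob T π A η (fun z xs => q (z t) ∧ z (t + 1) = k' ∧ obsAgree x v z xs) =
    prob T π A η (fun z xs => p (z t) ∧ z (t + 1) = k' ∧ obsAgree x v z xs) *
      prob T π A η (fun z xs => q (z t) ∧ z (t + 1) = k' ∧ obsAgree x u z xs) := by
  unfold prob obsAgree
  simp only [Finset.sum_mul, Finset.mul_sum]
  refine sum4_perm _ _ (swp t) (swp_invol t) ?_
  intro z xs z' xs'
  simp only [swp]
  rw [extSeq_spl (t + 1) z z', extSeq_spl t xs xs',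
    extSeq_spl (t + 1) z' z, extSeq_spl t xs' xs]
  have h0 := term_swap π A η h ht x k' p q hu hv (extSeq z') (extSeq z) (extSeq xs') (extSeq xs)
  convert h0 using 2 <;> split_ifs <;> rfl

end SmoothingAux

/-- **Step 1 of the smoothing proof** (by induction on the horizon): the
paper's `P(z_t = k | z_{t+1} = k', x_{1:u}) = P(z_t = k | z_{t+1} = k', x_{1:t})`
for all `t ≤ u ≤ T` (with `1 ≤ t ≤ T-1`); in particular with `u = T`, the
current state depends on all future observations only through the next state.
Stated with 0-based internal time `t` (`t + 1 < T`); the paper's horizon `u`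
is the number of conditioned-upon observations. -/
theorem smoothing_step_1
    {𝒳 : Type*} [Fintype 𝒳] [Nonempty 𝒳] {K T : ℕ} [NeZero K] (hT : 1 ≤ T)
    (π : Fin K → ℝ) (A : ℕ → Fin K → (ℕ → 𝒳) → Fin K → ℝ)
    (η : ℕ → Fin K → (ℕ → 𝒳) → 𝒳 → ℝ)
    (h : IsRARHMM T π A η)
    (t : ℕ) (ht : t + 1 < T) (x : ℕ → 𝒳) (k k' : Fin K)
    (hpos : ∀ u, t + 1 ≤ u → u ≤ T →
      0 < prob T π A η (fun z xs => z (t + 1) = k' ∧ obsAgree x u z xs)) :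
    (∀ u, t + 1 ≤ u → u ≤ T →
      condProb T π A η (fun z _ => z t = k)
          (fun z xs => z (t + 1) = k' ∧ obsAgree x u z xs) =
        condProb T π A η (fun z _ => z t = k)
          (fun z xs => z (t + 1) = k' ∧ obsAgree x (t + 1) z xs)) ∧
    condProb T π A η (fun z _ => z t = k)
        (fun z xs => z (t + 1) = k' ∧ obsAgree x T z xs) =
      condProb T π A η (fun z _ => z t = k)
        (fun z xs => z (t + 1) = k' ∧ obsAgree x (t + 1) z xs) := by
  have key : ∀ u, t + 1 ≤ u → u ≤ T →
      condProb T π A η (fun z _ => z t = k)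
          (fun z xs => z (t + 1) = k' ∧ obsAgree x u z xs) =
        condProb T π A η (fun z _ => z t = k)
          (fun z xs => z (t + 1) = k' ∧ obsAgree x (t + 1) z xs) := by
    intro u h1 h2
    unfold condProb
    rw [div_eq_div_iff (hpos u h1 h2).ne' (hpos (t + 1) le_rfl (by omega)).ne']
    have eD : ∀ w : ℕ,
        prob T π A η (fun z xs => z (t + 1) = k' ∧ obsAgree x w z xs) =
          prob T π A η (fun z xs =>
            (fun _ : Fin K => True) (z t) ∧ z (t + 1) = k' ∧ obsAgree x w z xs) :=
      fun w => prob_congr T π A η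
        (fun z xs => ⟨fun hh => ⟨trivial, hh⟩, fun hh => hh.2⟩)
    have eN : ∀ w : ℕ,
        prob T π A η (fun z xsv => (fun z _ => z t = k) z xsv ∧
            (fun z xs => z (t + 1) = k' ∧ obsAgree x w z xs) z xsv) =
          prob T π A η (fun z xs =>
            (fun s : Fin K => s = k) (z t) ∧ z (t + 1) = k' ∧ obsAgree x w z xs) :=
      fun w => prob_congr T π A η (fun z xs => Iff.rfl)
    rw [eN u, eN (t + 1), eD u, eD (t + 1)]
    exact prob_cross π A η h ht x k' (fun s => s = k) (fun _ => True) h1 le_rfl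
  exact ⟨key, key T (by omega) le_rfl⟩

end RARHMM
end

section
/- Per-entity factorization of the variational E-Z update in a hierarchical switching recurrent dynamical model: fix an observation collection x = (x_t^{(j)}) for all entities j ∈ {1,…,J} and timesteps t ∈ {0,…,T}, and fix a probability mass function q_s on system-state sequences s_{0:T} ∈ {1,…,L}^{T+1}. Assume all factors of the HSRDM joint density evaluated on x are strictly positive. Then there exist functions f_1, …, f_J with f_j : {1,…,K}^{T+1} → ℝ such that for every collection of entity-state sequences z^{(1:J)} = (z_{0:T}^{(1)}, …, z_{0:T}^{(J)}), the expectation E_{q_s}[ log p(x, z^{(1:J)}, s_{0:T} | θ) ] = C + Σ_{j=1}^{J} f_j(z_{0:T}^{(j)}) for a constant C not depending on z^{(1:J)}. Consequently, the probability distribution on z^{(1:J)} proportional to exp{ E_{q_s}[ log p(x, z^{(1:J)}, s_{0:T} | θ) ] } is a product of J distributions, one per entity, even though no such factorization was assumed. -/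
open Finset
open scoped Classical

namespace HSRDM

instance {n : ℕ} [NeZero n] : Nonempty (Fin n) :=
  ⟨⟨0, Nat.pos_of_ne_zero (NeZero.ne n)⟩⟩

/-- Extend a sequence indexed by `Fin n` to all of `ℕ`, using an arbitrary
value beyond `n`. -/
noncomputable def extSeq {α : Type*} [Nonempty α] {n : ℕ} (f : Fin n → α) (i : ℕ) : α :=
  if h : i < n then f ⟨i, h⟩ else Classical.arbitrary α

variable {𝒳 : Type*}

/-- Joint pmf of a hierarchical switching recurrent dynamical model (HSRDM)
over `J` entities and timesteps `0, …, T`: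
`p(x, z^{(1:J)}, s_{0:T} | θ) = π_s(s_0) ∏_t p(s_t | s_{t-1}, x_{t-1}^{(1:J)})
  · ∏_j [ π_{z,j}(z_0^{(j)} | s_0) ∏_t p(z_t^{(j)} | z_{t-1}^{(j)}, x_{t-1}^{(j)}, s_t)
          · p(x_0^{(j)} | z_0^{(j)}) ∏_t p(x_t^{(j)} | x_{t-1}^{(j)}, z_t^{(j)}) ]`.
Here `πs` is the system-state initial distribution, `Asys t s' xprev s` the
system transition kernel, `πz j s k` the entity initial-state distribution,
`Az t j k xprev s k'` the entity transition kernel, `em0 j k o` the initial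
emission and `em t j xprev k o` the autoregressive emission. -/
noncomputable def joint {J L K : ℕ} (T : ℕ)
    (πs : Fin L → ℝ)
    (Asys : ℕ → Fin L → (Fin J → 𝒳) → Fin L → ℝ)
    (πz : Fin J → Fin L → Fin K → ℝ)
    (Az : ℕ → Fin J → Fin K → 𝒳 → Fin L → Fin K → ℝ)
    (em0 : Fin J → Fin K → 𝒳 → ℝ)
    (em : ℕ → Fin J → 𝒳 → Fin K → 𝒳 → ℝ)
    (x : ℕ → Fin J → 𝒳) (z : Fin J → ℕ → Fin K) (s : ℕ → Fin L) : ℝ :=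
  πs (s 0) * (∏ t ∈ Finset.Icc 1 T, Asys t (s (t - 1)) (x (t - 1)) (s t)) *
    ∏ j : Fin J,
      (πz j (s 0) (z j 0) *
        (∏ t ∈ Finset.Icc 1 T, Az t j (z j (t - 1)) (x (t - 1) j) (s t) (z j t)) *
        em0 j (z j 0) (x 0 j) *
        (∏ t ∈ Finset.Icc 1 T, em t j (x (t - 1) j) (z j t) (x t j)))

/-- All the conditional factors of the HSRDM are probability distributions
over their first (generated) argument. -/
structure IsHSRDM {J L K : ℕ} [Fintype 𝒳] (T : ℕ)
    (πs : Fin L → ℝ)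
    (Asys : ℕ → Fin L → (Fin J → 𝒳) → Fin L → ℝ)
    (πz : Fin J → Fin L → Fin K → ℝ)
    (Az : ℕ → Fin J → Fin K → 𝒳 → Fin L → Fin K → ℝ)
    (em0 : Fin J → Fin K → 𝒳 → ℝ)
    (em : ℕ → Fin J → 𝒳 → Fin K → 𝒳 → ℝ) : Prop where
  piS_nonneg : ∀ l, 0 ≤ πs l
  piS_sum : ∑ l, πs l = 1
  Asys_nonneg : ∀ t l xp l', 0 ≤ Asys t l xp l'
  Asys_sum : ∀ t, 1 ≤ t → t ≤ T → ∀ l xp, ∑ l', Asys t l xp l' = 1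
  piZ_nonneg : ∀ j l k, 0 ≤ πz j l k
  piZ_sum : ∀ j l, ∑ k, πz j l k = 1
  Az_nonneg : ∀ t j k xp l k', 0 ≤ Az t j k xp l k'
  Az_sum : ∀ t, 1 ≤ t → t ≤ T → ∀ j k xp l, ∑ k', Az t j k xp l k' = 1
  em0_nonneg : ∀ j k o, 0 ≤ em0 j k o
  em0_sum : ∀ j k, ∑ o, em0 j k o = 1
  em_nonneg : ∀ t j xp k o, 0 ≤ em t j xp k o
  em_sum : ∀ t, 1 ≤ t → t ≤ T → ∀ j xp k, ∑ o, em t j xp k o = 1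

/-- **Per-entity factorization of the variational E-Z update** in an HSRDM.
Given a variational pmf `qs` over system-state sequences `s_{0:T}`, the
function `E z = 𝔼_{qs}[log p(x, z^{(1:J)}, s_{0:T} | θ)]` decomposes as a
constant plus a sum of per-entity terms; consequently the distribution over
`z^{(1:J)}` proportional to `exp (E z)` is a product of `J` distributions,
one per entity. -/
theorem vez_update_factorizes_over_entities
    {𝒳 : Type*} [Fintype 𝒳] {J L K T : ℕ} [NeZero J] [NeZero L] [NeZero K]
    (πs : Fin L → ℝ)
    (Asys : ℕ → Fin L → (Fin J → 𝒳) → Fin L → ℝ)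
    (πz : Fin J → Fin L → Fin K → ℝ)
    (Az : ℕ → Fin J → Fin K → 𝒳 → Fin L → Fin K → ℝ)
    (em0 : Fin J → Fin K → 𝒳 → ℝ)
    (em : ℕ → Fin J → 𝒳 → Fin K → 𝒳 → ℝ)
    (h : IsHSRDM T πs Asys πz Az em0 em)
    (x : ℕ → Fin J → 𝒳)
    -- all factors of the joint density, evaluated on the fixed observations `x`,
    -- are strictly positive:
    (hpos_piS : ∀ l, 0 < πs l)
    (hpos_Asys : ∀ t, 1 ≤ t → t ≤ T → ∀ l l', 0 < Asys t l (x (t - 1)) l')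
    (hpos_piZ : ∀ j l k, 0 < πz j l k)
    (hpos_Az : ∀ t, 1 ≤ t → t ≤ T → ∀ j k l k', 0 < Az t j k (x (t - 1) j) l k')
    (hpos_em0 : ∀ j k, 0 < em0 j k (x 0 j))
    (hpos_em : ∀ t, 1 ≤ t → t ≤ T → ∀ j k, 0 < em t j (x (t - 1) j) k (x t j))
    (qs : (Fin (T + 1) → Fin L) → ℝ)
    (hqs_nonneg : ∀ s, 0 ≤ qs s) (hqs_sum : ∑ s, qs s = 1)
    (E : (Fin J → Fin (T + 1) → Fin K) → ℝ)
    (hE : ∀ z : Fin J → Fin (T + 1) → Fin K,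
      E z = ∑ s : Fin (T + 1) → Fin L, qs s *
        Real.log (joint T πs Asys πz Az em0 em x (fun j => extSeq (z j)) (extSeq s))) :
    ∃ (C : ℝ) (f : Fin J → (Fin (T + 1) → Fin K) → ℝ),
      (∀ z : Fin J → Fin (T + 1) → Fin K, E z = C + ∑ j : Fin J, f j (z j)) ∧
      ∃ q : Fin J → (Fin (T + 1) → Fin K) → ℝ,
        (∀ j : Fin J, (∀ w, 0 ≤ q j w) ∧ (∑ w, q j w = 1)) ∧
        (∀ z : Fin J → Fin (T + 1) → Fin K,
          Real.exp (E z) / (∑ z' : Fin J → Fin (T + 1) → Fin K, Real.exp (E z')) =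
            ∏ j : Fin J, q j (z j)) := by
  classical
  -- system-level factor
  set A : (Fin (T + 1) → Fin L) → ℝ := fun s =>
    πs (extSeq s 0) *
      ∏ t ∈ Finset.Icc 1 T, Asys t (extSeq s (t - 1)) (x (t - 1)) (extSeq s t) with hA_def
  -- per-entity factor
  set B : Fin J → (Fin (T + 1) → Fin K) → (Fin (T + 1) → Fin L) → ℝ := fun j w s =>
    πz j (extSeq s 0) (extSeq w 0) *
      (∏ t ∈ Finset.Icc 1 T,
        Az t j (extSeq w (t - 1)) (x (t - 1) j) (extSeq s t) (extSeq w t)) *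
      em0 j (extSeq w 0) (x 0 j) *
      (∏ t ∈ Finset.Icc 1 T, em t j (x (t - 1) j) (extSeq w t) (x t j)) with hB_def
  have hA_pos : ∀ s, 0 < A s := by
    intro s
    refine mul_pos (hpos_piS _) (Finset.prod_pos ?_)
    intro t ht
    rw [Finset.mem_Icc] at ht
    exact hpos_Asys t ht.1 ht.2 _ _
  have hB_pos : ∀ j w s, 0 < B j w s := by
    intro j w s
    refine mul_pos (mul_pos (mul_pos (hpos_piZ _ _ _) (Finset.prod_pos ?_))
      (hpos_em0 _ _)) (Finset.prod_pos ?_) <;>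
    · intro t ht
      rw [Finset.mem_Icc] at ht
      first
      | exact hpos_Az t ht.1 ht.2 _ _ _ _
      | exact hpos_em t ht.1 ht.2 _ _
  have hjoint : ∀ (z : Fin J → Fin (T + 1) → Fin K) (s : Fin (T + 1) → Fin L),
      joint T πs Asys πz Az em0 em x (fun j => extSeq (z j)) (extSeq s) =
        A s * ∏ j : Fin J, B j (z j) s := by
    intro z s; rfl
  have hlog : ∀ (z : Fin J → Fin (T + 1) → Fin K) (s : Fin (T + 1) → Fin L),
      Real.log (joint T πs Asys πz Az em0 em x (fun j => extSeq (z j)) (extSeq s)) =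
        Real.log (A s) + ∑ j : Fin J, Real.log (B j (z j) s) := by
    intro z s
    rw [hjoint, Real.log_mul (hA_pos s).ne' (Finset.prod_pos fun j _ => hB_pos j (z j) s).ne',
      Real.log_prod]
    intro j _
    exact (hB_pos j (z j) s).ne'
  set C : ℝ := ∑ s, qs s * Real.log (A s) with hC_def
  set f : Fin J → (Fin (T + 1) → Fin K) → ℝ :=
    fun j w => ∑ s, qs s * Real.log (B j w s) with hf_def
  have hE' : ∀ z : Fin J → Fin (T + 1) → Fin K, E z = C + ∑ j : Fin J, f j (z j) := by
    intro z
    rw [hE]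
    simp only [hlog, mul_add, Finset.mul_sum]
    rw [Finset.sum_add_distrib, Finset.sum_comm]
  refine ⟨C, f, hE', ?_⟩
  -- the per-entity pmfs
  set g : Fin J → (Fin (T + 1) → Fin K) → ℝ := fun j w => Real.exp (f j w) with hg_def
  set D : Fin J → ℝ := fun j => ∑ w, g j w with hD_def
  have hD_pos : ∀ j, 0 < D j :=
    fun j => Finset.sum_pos (fun w _ => Real.exp_pos _) Finset.univ_nonempty
  refine ⟨fun j w => g j w / D j, fun j => ⟨fun w => by positivity, ?_⟩, ?_⟩
  · rw [← Finset.sum_div, div_self (hD_pos j).ne']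
  · have hexp : ∀ z : Fin J → Fin (T + 1) → Fin K,
        Real.exp (E z) = Real.exp C * ∏ j : Fin J, g j (z j) := by
      intro z
      rw [hE' z, Real.exp_add, Real.exp_sum, Real.exp_sum]
    have hsum : ∑ z' : Fin J → Fin (T + 1) → Fin K, Real.exp (E z') =
        Real.exp C * ∏ j : Fin J, D j := by
      simp only [hexp]
      rw [← Finset.mul_sum]
      congr 1
      rw [hD_def, Finset.prod_univ_sum]
      exact (Fintype.sum_equiv (Equiv.refl _) _ _ fun z => rfl).symm
    intro z
    rw [hexp, hsum, Finset.prod_div_distrib, mul_div_mul_left _ _ (Real.exp_pos C).ne']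

end HSRDM
end

section
/- Surrogate-HMM form of the variational E-S update in a hierarchical switching recurrent dynamical model: fix an observation collection x = (x_t^{(j)}) for all entities j ∈ {1,…,J} and timesteps t ∈ {0,…,T}, and fix a probability mass function q_z on collections of entity-state sequences z^{(1:J)} ∈ ({1,…,K}^{T+1})^J. Assume all factors of the HSRDM joint density evaluated on x are strictly positive. Then there exists a constant C not depending on s_{0:T} such that for every system-state sequence s_{0:T} ∈ {1,…,L}^{T+1}, exp{ E_{q_z}[ log p(x, z^{(1:J)}, s_{0:T} | θ) ] } = e^C · π_s(s_0) · ∏_{t=1}^{T} p(s_t | s_{t-1}, x_{t-1}^{(1:J)}, θ) · ∏_{j=1}^{J} ∏_{k=1}^{K} π_{z,j}(k | s_0)^{q_z(z_0^{(j)} = k)} · ∏_{j=1}^{J} ∏_{t=1}^{T} ∏_{k=1}^{K} ∏_{k'=1}^{K} p(z_t^{(j)} = k' | z_{t-1}^{(j)} = k, x_{t-1}^{(j)}, s_t, θ)^{q_z(z_{t-1}^{(j)} = k, z_t^{(j)} = k')}, where q_z(z_0^{(j)} = k) and q_z(z_{t-1}^{(j)} = k, z_t^{(j)} = k') denote the corresponding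 unary and adjacent pairwise marginals of q_z. In particular, the distribution on s_{0:T} proportional to exp{ E_{q_z}[ log p ] } has the form of the posterior of a hidden Markov model over system states with J independent autoregressive categorical emissions. -/
open Finset
open scoped Classical

namespace HSRDM

variable {𝒳 : Type*}

section Aux

lemma marg_sum1 {Z : Type*} [Fintype Z] {K : ℕ} (q : Z → ℝ) (g : Z → Fin K)
    (f : Fin K → ℝ) :
    ∑ k, (∑ z, if g z = k then q z else 0) * f k = ∑ z, q z * f (g z) := by
  have h1 : ∀ k : Fin K, (∑ z, if g z = k then q z else 0) * f k
      = ∑ z, (if g z = k then q z * f k else 0) := by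
    intro k
    rw [Finset.sum_mul]
    exact Finset.sum_congr rfl fun z _ => by split <;> simp
  rw [Finset.sum_congr rfl fun k _ => h1 k, Finset.sum_comm]
  exact Finset.sum_congr rfl fun z _ => by simp

lemma marg_sum2 {Z : Type*} [Fintype Z] {K : ℕ} (q : Z → ℝ) (g g' : Z → Fin K)
    (f : Fin K → Fin K → ℝ) :
    ∑ k, ∑ k', (∑ z, if g z = k ∧ g' z = k' then q z else 0) * f k k'
      = ∑ z, q z * f (g z) (g' z) := by
  have h1 : ∀ k k' : Fin K, (∑ z, if g z = k ∧ g' z = k' then q z else 0) * f k k'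
      = ∑ z, (if g z = k ∧ g' z = k' then q z * f k k' else 0) := by
    intro k k'
    rw [Finset.sum_mul]
    exact Finset.sum_congr rfl fun z _ => by split <;> simp
  calc ∑ k, ∑ k', (∑ z, if g z = k ∧ g' z = k' then q z else 0) * f k k'
      = ∑ k, ∑ k', ∑ z, (if g z = k ∧ g' z = k' then q z * f k k' else 0) :=
        Finset.sum_congr rfl fun k _ => Finset.sum_congr rfl fun k' _ => h1 k k'
    _ = ∑ k, ∑ z, ∑ k', (if g z = k ∧ g' z = k' then q z * f k k' else 0) :=
        Finset.sum_congr rfl fun k _ => Finset.sum_comm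
    _ = ∑ z, ∑ k, ∑ k', (if g z = k ∧ g' z = k' then q z * f k k' else 0) :=
        Finset.sum_comm
    _ = ∑ z, q z * f (g z) (g' z) := by
        refine Finset.sum_congr rfl fun z _ => ?_
        simp [ite_and]

end Aux

/-- **Surrogate-HMM form of the variational E-S update** in an HSRDM.
Given a variational pmf `qz` over collections of entity-state sequences, the
exponentiated expected log joint `exp (E s)`, with
`E s = 𝔼_{qz}[log p(x, z^{(1:J)}, s_{0:T} | θ)]`, equals (up to a constant
`e^C`) the initial system distribution, times the system transition factors,
times the entity initial-state factors raised to the unary marginals of `qz`,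
times the entity transition factors raised to the adjacent pairwise marginals
of `qz` — i.e. it has the form of the posterior of an HMM over system states
with `J` independent autoregressive categorical emissions. -/
theorem ves_update_is_surrogate_hmm
    {𝒳 : Type*} [Fintype 𝒳] {J L K T : ℕ} [NeZero J] [NeZero L] [NeZero K]
    (πs : Fin L → ℝ)
    (Asys : ℕ → Fin L → (Fin J → 𝒳) → Fin L → ℝ)
    (πz : Fin J → Fin L → Fin K → ℝ)
    (Az : ℕ → Fin J → Fin K → 𝒳 → Fin L → Fin K → ℝ)
    (em0 : Fin J → Fin K → 𝒳 → ℝ)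
    (em : ℕ → Fin J → 𝒳 → Fin K → 𝒳 → ℝ)
    (h : IsHSRDM T πs Asys πz Az em0 em)
    (x : ℕ → Fin J → 𝒳)
    -- all factors of the joint density, evaluated on the fixed observations `x`,
    -- are strictly positive:
    (hpos_piS : ∀ l, 0 < πs l)
    (hpos_Asys : ∀ t, 1 ≤ t → t ≤ T → ∀ l l', 0 < Asys t l (x (t - 1)) l')
    (hpos_piZ : ∀ j l k, 0 < πz j l k)
    (hpos_Az : ∀ t, 1 ≤ t → t ≤ T → ∀ j k l k', 0 < Az t j k (x (t - 1) j) l k')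
    (hpos_em0 : ∀ j k, 0 < em0 j k (x 0 j))
    (hpos_em : ∀ t, 1 ≤ t → t ≤ T → ∀ j k, 0 < em t j (x (t - 1) j) k (x t j))
    (qz : (Fin J → Fin (T + 1) → Fin K) → ℝ)
    (hqz_nonneg : ∀ z, 0 ≤ qz z) (hqz_sum : ∑ z, qz z = 1)
    (E : (Fin (T + 1) → Fin L) → ℝ)
    (hE : ∀ s : Fin (T + 1) → Fin L,
      E s = ∑ z : Fin J → Fin (T + 1) → Fin K, qz z *
        Real.log (joint T πs Asys πz Az em0 em x (fun j => extSeq (z j)) (extSeq s)))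
    -- unary marginals `qz(z_0^{(j)} = k)`:
    (m0 : Fin J → Fin K → ℝ)
    (hm0 : ∀ j k, m0 j k =
      ∑ z : Fin J → Fin (T + 1) → Fin K, if extSeq (z j) 0 = k then qz z else 0)
    -- adjacent pairwise marginals `qz(z_{t-1}^{(j)} = k, z_t^{(j)} = k')`:
    (m : Fin J → ℕ → Fin K → Fin K → ℝ)
    (hm : ∀ j t k k', m j t k k' =
      ∑ z : Fin J → Fin (T + 1) → Fin K,
        if extSeq (z j) (t - 1) = k ∧ extSeq (z j) t = k' then qz z else 0) :
    ∃ C : ℝ, ∀ s : Fin (T + 1) → Fin L,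
      Real.exp (E s) =
        Real.exp C * πs (extSeq s 0) *
          (∏ t ∈ Finset.Icc 1 T, Asys t (extSeq s (t - 1)) (x (t - 1)) (extSeq s t)) *
          (∏ j : Fin J, ∏ k : Fin K, πz j (extSeq s 0) k ^ (m0 j k)) *
          (∏ j : Fin J, ∏ t ∈ Finset.Icc 1 T, ∏ k : Fin K, ∏ k' : Fin K,
            Az t j k (x (t - 1) j) (extSeq s t) k' ^ (m j t k k')) := by
  classical
  -- positivity facts for all factors on Icc 1 T
  have hA : ∀ (s : Fin (T + 1) → Fin L), ∀ t ∈ Finset.Icc 1 T,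
      (0:ℝ) < Asys t (extSeq s (t - 1)) (x (t - 1)) (extSeq s t) := by
    intro s t ht
    obtain ⟨h1, h2⟩ := Finset.mem_Icc.mp ht
    exact hpos_Asys t h1 h2 _ _
  have hAzp : ∀ (z : Fin J → Fin (T + 1) → Fin K) (s : Fin (T + 1) → Fin L) (j : Fin J),
      ∀ t ∈ Finset.Icc 1 T,
      (0:ℝ) < Az t j (extSeq (z j) (t - 1)) (x (t - 1) j) (extSeq s t) (extSeq (z j) t) := by
    intro z s j t ht
    obtain ⟨h1, h2⟩ := Finset.mem_Icc.mp ht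
    exact hpos_Az t h1 h2 _ _ _ _
  have hemp : ∀ (z : Fin J → Fin (T + 1) → Fin K) (j : Fin J), ∀ t ∈ Finset.Icc 1 T,
      (0:ℝ) < em t j (x (t - 1) j) (extSeq (z j) t) (x t j) := by
    intro z j t ht
    obtain ⟨h1, h2⟩ := Finset.mem_Icc.mp ht
    exact hpos_em t h1 h2 _ _
  -- decomposition of the log of the joint
  have hlog : ∀ (z : Fin J → Fin (T + 1) → Fin K) (s : Fin (T + 1) → Fin L),
      Real.log (joint T πs Asys πz Az em0 em x (fun j => extSeq (z j)) (extSeq s)) =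
        Real.log (πs (extSeq s 0))
        + (∑ t ∈ Finset.Icc 1 T,
            Real.log (Asys t (extSeq s (t - 1)) (x (t - 1)) (extSeq s t)))
        + ∑ j : Fin J,
            (Real.log (πz j (extSeq s 0) (extSeq (z j) 0))
              + (∑ t ∈ Finset.Icc 1 T,
                  Real.log (Az t j (extSeq (z j) (t - 1)) (x (t - 1) j)
                    (extSeq s t) (extSeq (z j) t)))
              + Real.log (em0 j (extSeq (z j) 0) (x 0 j))
              + (∑ t ∈ Finset.Icc 1 T,
                  Real.log (em t j (x (t - 1) j) (extSeq (z j) t) (x t j)))) := by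
    intro z s
    have hPA : (0:ℝ) < ∏ t ∈ Finset.Icc 1 T,
        Asys t (extSeq s (t - 1)) (x (t - 1)) (extSeq s t) :=
      Finset.prod_pos (hA s)
    have hb : ∀ j : Fin J, (0:ℝ) <
        πz j (extSeq s 0) (extSeq (z j) 0) *
          (∏ t ∈ Finset.Icc 1 T, Az t j (extSeq (z j) (t - 1)) (x (t - 1) j)
            (extSeq s t) (extSeq (z j) t)) *
          em0 j (extSeq (z j) 0) (x 0 j) *
          (∏ t ∈ Finset.Icc 1 T, em t j (x (t - 1) j) (extSeq (z j) t) (x t j)) := by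
      intro j
      exact mul_pos (mul_pos (mul_pos (hpos_piZ j _ _)
        (Finset.prod_pos (hAzp z s j))) (hpos_em0 j _))
        (Finset.prod_pos (hemp z j))
    have hPJ : (0:ℝ) < ∏ j : Fin J,
        (πz j (extSeq s 0) (extSeq (z j) 0) *
          (∏ t ∈ Finset.Icc 1 T, Az t j (extSeq (z j) (t - 1)) (x (t - 1) j)
            (extSeq s t) (extSeq (z j) t)) *
          em0 j (extSeq (z j) 0) (x 0 j) *
          (∏ t ∈ Finset.Icc 1 T, em t j (x (t - 1) j) (extSeq (z j) t) (x t j))) :=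
      Finset.prod_pos fun j _ => hb j
    unfold joint
    rw [Real.log_mul (mul_pos (hpos_piS _) hPA).ne' hPJ.ne',
      Real.log_mul (hpos_piS _).ne' hPA.ne',
      Real.log_prod (fun t ht => (hA s t ht).ne'),
      Real.log_prod (fun j _ => (hb j).ne')]
    congr 1
    refine Finset.sum_congr rfl fun j _ => ?_
    rw [Real.log_mul (mul_pos (mul_pos (hpos_piZ j _ _)
        (Finset.prod_pos (hAzp z s j))) (hpos_em0 j _)).ne'
        (Finset.prod_pos (hemp z j)).ne',
      Real.log_mul (mul_pos (hpos_piZ j _ _)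
        (Finset.prod_pos (hAzp z s j))).ne' (hpos_em0 j _).ne',
      Real.log_mul (hpos_piZ j _ _).ne' (Finset.prod_pos (hAzp z s j)).ne',
      Real.log_prod (fun t ht => (hAzp z s j t ht).ne'),
      Real.log_prod (fun t ht => (hemp z j t ht).ne')]
  -- the constant
  refine ⟨∑ z : Fin J → Fin (T + 1) → Fin K, qz z *
      ∑ j : Fin J, (Real.log (em0 j (extSeq (z j) 0) (x 0 j))
        + ∑ t ∈ Finset.Icc 1 T,
            Real.log (em t j (x (t - 1) j) (extSeq (z j) t) (x t j))), fun s => ?_⟩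
  set C : ℝ := ∑ z : Fin J → Fin (T + 1) → Fin K, qz z *
      ∑ j : Fin J, (Real.log (em0 j (extSeq (z j) 0) (x 0 j))
        + ∑ t ∈ Finset.Icc 1 T,
            Real.log (em t j (x (t - 1) j) (extSeq (z j) t) (x t j))) with hC
  -- split the expected log joint into four pieces
  have step1 : E s =
      (∑ z : Fin J → Fin (T + 1) → Fin K, qz z *
        (Real.log (πs (extSeq s 0))
          + ∑ t ∈ Finset.Icc 1 T,
              Real.log (Asys t (extSeq s (t - 1)) (x (t - 1)) (extSeq s t))))
      + (∑ z : Fin J → Fin (T + 1) → Fin K, qz z *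
          ∑ j : Fin J, Real.log (πz j (extSeq s 0) (extSeq (z j) 0)))
      + (∑ z : Fin J → Fin (T + 1) → Fin K, qz z *
          ∑ j : Fin J, ∑ t ∈ Finset.Icc 1 T,
            Real.log (Az t j (extSeq (z j) (t - 1)) (x (t - 1) j)
              (extSeq s t) (extSeq (z j) t)))
      + C := by
    rw [hE s, hC, ← Finset.sum_add_distrib, ← Finset.sum_add_distrib,
      ← Finset.sum_add_distrib]
    refine Finset.sum_congr rfl fun z _ => ?_
    rw [hlog z s]
    simp only [Finset.sum_add_distrib]
    ring
  have hconst : (∑ z : Fin J → Fin (T + 1) → Fin K, qz z *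
      (Real.log (πs (extSeq s 0))
        + ∑ t ∈ Finset.Icc 1 T,
            Real.log (Asys t (extSeq s (t - 1)) (x (t - 1)) (extSeq s t))))
      = Real.log (πs (extSeq s 0))
        + ∑ t ∈ Finset.Icc 1 T,
            Real.log (Asys t (extSeq s (t - 1)) (x (t - 1)) (extSeq s t)) := by
    rw [← Finset.sum_mul, hqz_sum, one_mul]
  have hP : (∑ z : Fin J → Fin (T + 1) → Fin K, qz z *
      ∑ j : Fin J, Real.log (πz j (extSeq s 0) (extSeq (z j) 0)))
      = ∑ j : Fin J, ∑ k : Fin K, m0 j k * Real.log (πz j (extSeq s 0) k) := by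
    simp only [Finset.mul_sum]
    rw [Finset.sum_comm]
    refine Finset.sum_congr rfl fun j _ => ?_
    rw [← marg_sum1 qz (fun z => extSeq (z j) 0)
      (fun k => Real.log (πz j (extSeq s 0) k))]
    exact Finset.sum_congr rfl fun k _ => by rw [hm0 j k]
  have hQ : (∑ z : Fin J → Fin (T + 1) → Fin K, qz z *
      ∑ j : Fin J, ∑ t ∈ Finset.Icc 1 T,
        Real.log (Az t j (extSeq (z j) (t - 1)) (x (t - 1) j)
          (extSeq s t) (extSeq (z j) t)))
      = ∑ j : Fin J, ∑ t ∈ Finset.Icc 1 T, ∑ k : Fin K, ∑ k' : Fin K,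
          m j t k k' * Real.log (Az t j k (x (t - 1) j) (extSeq s t) k') := by
    simp only [Finset.mul_sum]
    rw [Finset.sum_comm]
    refine Finset.sum_congr rfl fun j _ => ?_
    rw [Finset.sum_comm]
    refine Finset.sum_congr rfl fun t _ => ?_
    rw [← marg_sum2 qz (fun z => extSeq (z j) (t - 1)) (fun z => extSeq (z j) t)
      (fun k k' => Real.log (Az t j k (x (t - 1) j) (extSeq s t) k'))]
    refine Finset.sum_congr rfl fun k _ => Finset.sum_congr rfl fun k' _ => ?_
    rw [hm j t k k']
  have hEs : E s = C + Real.log (πs (extSeq s 0))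
      + (∑ t ∈ Finset.Icc 1 T,
          Real.log (Asys t (extSeq s (t - 1)) (x (t - 1)) (extSeq s t)))
      + (∑ j : Fin J, ∑ k : Fin K, m0 j k * Real.log (πz j (extSeq s 0) k))
      + (∑ j : Fin J, ∑ t ∈ Finset.Icc 1 T, ∑ k : Fin K, ∑ k' : Fin K,
          m j t k k' * Real.log (Az t j k (x (t - 1) j) (extSeq s t) k')) := by
    rw [step1, hconst, hP, hQ]; ring
  -- exponentiate each additive piece
  have eA : Real.exp (∑ t ∈ Finset.Icc 1 T,
      Real.log (Asys t (extSeq s (t - 1)) (x (t - 1)) (extSeq s t)))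
      = ∏ t ∈ Finset.Icc 1 T, Asys t (extSeq s (t - 1)) (x (t - 1)) (extSeq s t) := by
    rw [Real.exp_sum]
    exact Finset.prod_congr rfl fun t ht => Real.exp_log (hA s t ht)
  have eP : Real.exp (∑ j : Fin J, ∑ k : Fin K, m0 j k * Real.log (πz j (extSeq s 0) k))
      = ∏ j : Fin J, ∏ k : Fin K, πz j (extSeq s 0) k ^ (m0 j k) := by
    rw [Real.exp_sum]
    refine Finset.prod_congr rfl fun j _ => ?_
    rw [Real.exp_sum]
    refine Finset.prod_congr rfl fun k _ => ?_
    rw [Real.rpow_def_of_pos (hpos_piZ j _ k), mul_comm]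
  have eQ : Real.exp (∑ j : Fin J, ∑ t ∈ Finset.Icc 1 T, ∑ k : Fin K, ∑ k' : Fin K,
      m j t k k' * Real.log (Az t j k (x (t - 1) j) (extSeq s t) k'))
      = ∏ j : Fin J, ∏ t ∈ Finset.Icc 1 T, ∏ k : Fin K, ∏ k' : Fin K,
          Az t j k (x (t - 1) j) (extSeq s t) k' ^ (m j t k k') := by
    rw [Real.exp_sum]
    refine Finset.prod_congr rfl fun j _ => ?_
    rw [Real.exp_sum]
    refine Finset.prod_congr rfl fun t ht => ?_
    rw [Real.exp_sum]
    refine Finset.prod_congr rfl fun k _ => ?_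
    rw [Real.exp_sum]
    refine Finset.prod_congr rfl fun k' _ => ?_
    obtain ⟨h1, h2⟩ := Finset.mem_Icc.mp ht
    rw [Real.rpow_def_of_pos (hpos_Az t h1 h2 j k _ k'), mul_comm]
  rw [hEs, Real.exp_add, Real.exp_add, Real.exp_add, Real.exp_add,
    Real.exp_log (hpos_piS _), eA, eP, eQ]


end HSRDM
end
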